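/- arXiv:1104.1064 — 3 statements merged into one kernel-verified Lean document; each statement's English description precedes it below -/
import Mathlib

section
/- Let 0 < p ≤ 1 and 0 < ι < 1. There is a constant K > 0 (depending only on p and ι) such that for all real x ≠ 0 and all real y, we have | |x+y|^p − |x|^p − p|x|^{p−1} sign(x) y · 1_{|y| ≤ |x|/2} | ≤ K |y|^{p+1−ι} / |x|^{1−ι} + |y|^p · 1_{|y| > |x|/2}. -/
/-! For `|y| ≤ |x|/2` the segment from `x` to `x + y` stays at distance `≥ |x|/2` from the
singularity of `t ↦ t ^ p`, so the mean value theorem applied twice bounds the Taylor remainder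
by `p (1 - p) (|x|/2) ^ (p - 2) y ^ 2`; trading `|y| ^ (1 - p + ι) ≤ (|x|/2) ^ (1 - p + ι)`
turns this into `|y| ^ (p + 1 - ι) / |x| ^ (1 - ι)` (with `K = 1`). For `|y| > |x|/2`
subadditivity of `t ↦ t ^ p` gives `||x + y| ^ p - |x| ^ p| ≤ |y| ^ p`. The case `x < 0` follows
from `x > 0` by the symmetry `(x, y) ↦ (-x, -y)`. -/

open Real Set

lemma abs_abs_add_rpow_sub_abs_rpow_le {p : ℝ} (hp0 : 0 ≤ p) (hp1 : p ≤ 1) (x y : ℝ) :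
    |(|x + y| ^ p - |x| ^ p)| ≤ |y| ^ p := by
  have h₁ : |x + y| ^ p ≤ |x| ^ p + |y| ^ p :=
    (rpow_le_rpow (abs_nonneg _) (abs_add_le x y) hp0).trans
      (rpow_add_le_add_rpow (abs_nonneg _) (abs_nonneg _) hp0 hp1)
  have h₂ : |x| ^ p ≤ |x + y| ^ p + |y| ^ p := by
    refine (rpow_le_rpow (abs_nonneg _) ?_ hp0).trans
      (rpow_add_le_add_rpow (abs_nonneg _) (abs_nonneg _) hp0 hp1)
    simpa using abs_add_le (x + y) (-y)
  rw [abs_sub_le_iff]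
  constructor <;> linarith

lemma abs_rpow_sub_rpow_le_of_le {a s t q : ℝ} (ha : 0 < a) (hq : q ≤ 1) (hs : a ≤ s)
    (ht : a ≤ t) : |t ^ q - s ^ q| ≤ |q| * a ^ (q - 1) * |t - s| := by
  have hderiv : ∀ u ∈ Ici a, HasDerivWithinAt (· ^ q) (q * u ^ (q - 1)) (Ici a) u :=
    fun u hu => (hasDerivAt_rpow_const (Or.inl (ha.trans_le hu).ne')).hasDerivWithinAt
  have hbound : ∀ u ∈ Ici a, ‖q * u ^ (q - 1)‖ ≤ |q| * a ^ (q - 1) := fun u hu => by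
    rw [norm_mul, norm_eq_abs, norm_of_nonneg (rpow_nonneg (ha.le.trans hu) _)]
    exact mul_le_mul_of_nonneg_left (rpow_le_rpow_of_nonpos ha hu (by linarith)) (abs_nonneg q)
  simpa only [norm_eq_abs] using
    (convex_Ici a).norm_image_sub_le_of_norm_hasDerivWithin_le hderiv hbound hs ht

lemma abs_rpow_sub_rpow_sub_mul_le {a s t p : ℝ} (ha : 0 < a) (hp : p ≤ 2) (hs : a ≤ s)
    (ht : a ≤ t) :
    |t ^ p - s ^ p - p * s ^ (p - 1) * (t - s)| ≤ |p * (p - 1)| * a ^ (p - 2) * (t - s) ^ 2 := by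
  have hmem : ∀ u ∈ uIcc s t, a ≤ u := fun u hu => (le_min hs ht).trans hu.1
  have hderiv : ∀ u ∈ uIcc s t, HasDerivWithinAt (fun u => u ^ p - p * s ^ (p - 1) * u)
      (p * u ^ (p - 1) - p * s ^ (p - 1)) (uIcc s t) u := fun u hu => by
    simpa using ((hasDerivAt_rpow_const (p := p) (Or.inl (ha.trans_le (hmem u hu)).ne')).fun_sub
      ((hasDerivAt_id' u).const_mul (p * s ^ (p - 1)))).hasDerivWithinAt
  have hbound : ∀ u ∈ uIcc s t, ‖p * u ^ (p - 1) - p * s ^ (p - 1)‖ ≤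
      |p * (p - 1)| * a ^ (p - 2) * |t - s| := fun u hu => by
    have h := abs_rpow_sub_rpow_le_of_le ha (by linarith : p - 1 ≤ 1) hs (hmem u hu)
    rw [sub_sub, one_add_one_eq_two] at h
    calc ‖p * u ^ (p - 1) - p * s ^ (p - 1)‖ = |p| * |u ^ (p - 1) - s ^ (p - 1)| := by
          rw [norm_eq_abs, ← mul_sub, abs_mul]
      _ ≤ |p| * (|p - 1| * a ^ (p - 2) * |t - s|) := by
          gcongr
          exact h.trans (mul_le_mul_of_nonneg_left (abs_sub_left_of_mem_uIcc hu) (by positivity))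
      _ = |p * (p - 1)| * a ^ (p - 2) * |t - s| := by rw [abs_mul]; ring
  have := (convex_uIcc s t).norm_image_sub_le_of_norm_hasDerivWithin_le hderiv hbound
    left_mem_uIcc right_mem_uIcc
  rw [norm_eq_abs, norm_eq_abs] at this
  convert this using 1
  · congr 1; ring
  · rw [← sq_abs (t - s), sq]; ring

lemma sq_le_abs_rpow_mul_rpow {y a e : ℝ} (hya : |y| ≤ a) (he : e ≤ 2) :
    y ^ 2 ≤ |y| ^ e * a ^ (2 - e) := by
  calc y ^ 2 = |y| ^ (e + (2 - e)) := by
        rw [add_sub_cancel, rpow_two, sq_abs]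
    _ = |y| ^ e * |y| ^ (2 - e) := rpow_add' (abs_nonneg y) (by norm_num)
    _ ≤ |y| ^ e * a ^ (2 - e) := by gcongr

lemma abs_add_rpow_sub_rpow_sub_mul_le_of_abs_le_half {p ι x y : ℝ} (hp0 : 0 ≤ p)
    (hp1 : p ≤ 1) (hι : 0 ≤ ι) (hx : 0 < x) (hy : |y| ≤ x / 2) :
    |(x + y) ^ p - x ^ p - p * x ^ (p - 1) * y| ≤ |y| ^ (p + 1 - ι) / x ^ (1 - ι) := by
  have ha : 0 < x / 2 := by positivity
  have hxy : x / 2 ≤ x + y := by linarith [neg_abs_le y]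
  have htaylor :=
    abs_rpow_sub_rpow_sub_mul_le (p := p) ha (by linarith) (half_le_self hx.le) hxy
  rw [add_sub_cancel_left] at htaylor
  have hsq := sq_le_abs_rpow_mul_rpow hy (by linarith : p + 1 - ι ≤ 2)
  have hexp : (x / 2) ^ (p - 2) * (x / 2) ^ (2 - (p + 1 - ι)) = ((x / 2) ^ (1 - ι))⁻¹ := by
    rw [← rpow_add ha, ← rpow_neg ha.le]; ring_nf
  have hhalf : x ^ (1 - ι) / 2 ≤ (x / 2) ^ (1 - ι) := by
    rw [div_rpow hx.le zero_le_two]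
    gcongr
    simpa using rpow_le_rpow_of_exponent_le one_le_two (by linarith : 1 - ι ≤ 1)
  have hcoef : 2 * |p * (p - 1)| ≤ 1 := by
    rw [abs_of_nonpos (by nlinarith)]; nlinarith [sq_nonneg (2 * p - 1)]
  calc |(x + y) ^ p - x ^ p - p * x ^ (p - 1) * y|
      ≤ |p * (p - 1)| * (x / 2) ^ (p - 2) * y ^ 2 := htaylor
    _ ≤ |p * (p - 1)| * (x / 2) ^ (p - 2) *
          (|y| ^ (p + 1 - ι) * (x / 2) ^ (2 - (p + 1 - ι))) := by
        gcongr
    _ = |p * (p - 1)| * |y| ^ (p + 1 - ι) / (x / 2) ^ (1 - ι) := by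
        rw [div_eq_mul_inv _ ((x / 2) ^ (1 - ι)), ← hexp]; ring
    _ ≤ |p * (p - 1)| * |y| ^ (p + 1 - ι) / (x ^ (1 - ι) / 2) := by gcongr
    _ = 2 * |p * (p - 1)| * (|y| ^ (p + 1 - ι) / x ^ (1 - ι)) := by ring
    _ ≤ |y| ^ (p + 1 - ι) / x ^ (1 - ι) := mul_le_of_le_one_left (by positivity) hcoef

lemma power_increment_taylor_bound_of_pos {p ι x : ℝ} (hp0 : 0 ≤ p) (hp1 : p ≤ 1)
    (hι : 0 ≤ ι) (hx : 0 < x) (y : ℝ) :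
    |(|x + y| ^ p - |x| ^ p -
        p * |x| ^ (p - 1) * Real.sign x * y * (if |y| ≤ |x| / 2 then 1 else 0))|
      ≤ |y| ^ (p + 1 - ι) / |x| ^ (1 - ι) + |y| ^ p * (if |x| / 2 < |y| then 1 else 0) := by
  by_cases hy : |y| ≤ |x| / 2
  · rw [if_pos hy, if_neg hy.not_gt, mul_one, mul_zero, add_zero]
    rw [abs_of_pos hx] at hy ⊢
    rw [abs_of_pos (by linarith [neg_abs_le y] : 0 < x + y), Real.sign_of_pos hx, mul_one]
    exact abs_add_rpow_sub_rpow_sub_mul_le_of_abs_le_half hp0 hp1 hι hx hy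
  · rw [if_neg hy, if_pos (not_le.1 hy), mul_zero, sub_zero, mul_one]
    exact (abs_abs_add_rpow_sub_abs_rpow_le hp0 hp1 x y).trans
      (le_add_of_nonneg_left (by positivity))

theorem power_increment_taylor_bound_general (p ι : ℝ) (hp0 : 0 < p) (hp1 : p ≤ 1)
    (hι0 : 0 < ι) :
    ∃ K > 0, ∀ x y : ℝ, x ≠ 0 →
      abs (|x + y| ^ p - |x| ^ p -
          p * |x| ^ (p - 1) * Real.sign x * y * (if |y| ≤ |x| / 2 then 1 else 0))
        ≤ K * |y| ^ (p + 1 - ι) / |x| ^ (1 - ι)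
          + |y| ^ p * (if |x| / 2 < |y| then 1 else 0) := by
  refine ⟨1, one_pos, fun x y hx => ?_⟩
  rw [one_mul]
  rcases hx.lt_or_gt with hx | hx
  · simpa only [← neg_add, abs_neg, Real.sign_neg, mul_neg, neg_mul, neg_neg] using
      power_increment_taylor_bound_of_pos hp0.le hp1 hι0.le (neg_pos.2 hx) (-y)
  · exact power_increment_taylor_bound_of_pos hp0.le hp1 hι0.le hx y

theorem power_increment_taylor_bound (p ι : ℝ) (hp0 : 0 < p) (hp1 : p ≤ 1)
    (hι0 : 0 < ι) (hι1 : ι < 1) :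
    ∃ K > 0, ∀ x y : ℝ, x ≠ 0 →
      abs (|x + y| ^ p - |x| ^ p -
          p * |x| ^ (p - 1) * Real.sign x * y * (if |y| ≤ |x| / 2 then 1 else 0))
        ≤ K * |y| ^ (p + 1 - ι) / |x| ^ (1 - ι)
          + |y| ^ p * (if |x| / 2 < |y| then 1 else 0) :=
  power_increment_taylor_bound_general p ι hp0 hp1 hι0
end

section
/- Let X₁, X₂ be real random variables, p > 0, ε > 0 and k ∈ (0,1). Then there is a constant K depending only on k and p such that E[ |X₁+X₂|^{−p} · 1_{|X₁+X₂| ≥ ε} ] ≤ K [ ε^{−p} P(|X₂| ≥ kε) + E( |X₁|^{−p} · 1_{|X₁| > (1−k)ε} ) ]. -/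
/-!
Split the event `{ε ≤ |X₁ + X₂|}` according to whether `|X₂| ≥ kε`. Where it is, the integrand
is at most `ε^(-p)`. Where it is not, `|X₁| > (1 - k)ε` and `|X₁| ≤ (1 + k)|X₁ + X₂|`, so
`|X₁ + X₂|^(-p) ≤ (1 + k)^p |X₁|^(-p)`; hence `K = (1 + k)^p` works.
-/

open MeasureTheory

open scoped ENNReal

theorem sub_mul_lt_abs_of_le_abs_add {x y ε k : ℝ} (h : ε ≤ |x + y|) (hy : |y| < k * ε) :
    (1 - k) * ε < |x| := by
  have := abs_sub_abs_le_abs_sub (x + y) y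
  rw [add_sub_cancel_right] at this
  linarith

theorem abs_le_one_add_mul_abs_add {x y ε k : ℝ} (hk : 0 ≤ k) (h : ε ≤ |x + y|)
    (hy : |y| < k * ε) : |x| ≤ (1 + k) * |x + y| := by
  have := abs_sub (x + y) y
  rw [add_sub_cancel_right] at this
  nlinarith

theorem rpow_neg_le_mul_rpow_neg {a b c p : ℝ} (ha : 0 < a) (hc : 0 < c) (hab : a ≤ c * b)
    (hp : 0 ≤ p) : b ^ (-p) ≤ c ^ p * a ^ (-p) := by
  have hb : 0 < b := pos_of_mul_pos_right (ha.trans_le hab) hc.le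
  calc b ^ (-p) = c ^ p * (c * b) ^ (-p) := by
        rw [Real.mul_rpow hc.le hb.le, ← mul_assoc, ← Real.rpow_add hc, add_neg_cancel,
          Real.rpow_zero, one_mul]
    _ ≤ c ^ p * a ^ (-p) := mul_le_mul_of_nonneg_left
        (Real.rpow_le_rpow_of_nonpos ha hab (neg_nonpos.mpr hp)) (by positivity)

theorem setLIntegral_le_mul_measure_add_mul_setLIntegral {α : Type*} [MeasurableSpace α]
    {μ : Measure α} {A B C : Set α} {f g : α → ℝ≥0∞} {c K : ℝ≥0∞} (hA : MeasurableSet A)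
    (hB : MeasurableSet B) (hK : K ≠ ∞) (hf_inter : ∀ x ∈ A ∩ B, f x ≤ c)
    (hsdiff : A \ B ⊆ C) (hf_sdiff : ∀ x ∈ A \ B, f x ≤ K * g x) :
    ∫⁻ x in A, f x ∂μ ≤ c * μ B + K * ∫⁻ x in C, g x ∂μ := by
  rw [← lintegral_inter_add_sdiff f A hB]
  gcongr
  · calc ∫⁻ x in A ∩ B, f x ∂μ ≤ ∫⁻ _ in A ∩ B, c ∂μ := setLIntegral_mono measurable_const hf_inter
      _ = c * μ (A ∩ B) := setLIntegral_const _ c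
      _ ≤ c * μ B := by gcongr; exact Set.inter_subset_right
  · calc ∫⁻ x in A \ B, f x ∂μ ≤ ∫⁻ x in A \ B, K * g x ∂μ :=
          setLIntegral_mono' (hA.diff hB) hf_sdiff
      _ = K * ∫⁻ x in A \ B, g x ∂μ := lintegral_const_mul' K g hK
      _ ≤ K * ∫⁻ x in C, g x ∂μ := by gcongr

theorem neg_moment_sum_bound_general (Ω : Type*) [MeasurableSpace Ω] (μ : Measure Ω)
    (p k : ℝ) (hp : 0 < p) (hk : k ∈ Set.Ioo (0 : ℝ) 1) :
    ∃ K > 0, ∀ ε : ℝ, 0 < ε → ∀ X₁ X₂ : Ω → ℝ, Measurable X₁ → Measurable X₂ →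
      ∫⁻ ω in {ω | ε ≤ |X₁ ω + X₂ ω|}, ENNReal.ofReal (|X₁ ω + X₂ ω| ^ (-p)) ∂μ
        ≤ ENNReal.ofReal K *
            (ENNReal.ofReal (ε ^ (-p)) * μ {ω | k * ε ≤ |X₂ ω|}
              + ∫⁻ ω in {ω | (1 - k) * ε < |X₁ ω|},
                  ENNReal.ofReal (|X₁ ω| ^ (-p)) ∂μ) := by
  obtain ⟨hk0, hk1⟩ := hk
  refine ⟨(1 + k) ^ p, by positivity, fun ε hε X₁ X₂ hX₁ hX₂ => ?_⟩
  have hK : 1 ≤ ENNReal.ofReal ((1 + k) ^ p) :=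
    ENNReal.one_le_ofReal.mpr (Real.one_le_rpow (by linarith) hp.le)
  have hsdiff : {ω | ε ≤ |X₁ ω + X₂ ω|} \ {ω | k * ε ≤ |X₂ ω|} ⊆ {ω | (1 - k) * ε < |X₁ ω|} :=
    fun ω ⟨hsum, hX₂ω⟩ => sub_mul_lt_abs_of_le_abs_add hsum (not_le.mp hX₂ω)
  calc _ ≤ ENNReal.ofReal (ε ^ (-p)) * μ {ω | k * ε ≤ |X₂ ω|}
        + ENNReal.ofReal ((1 + k) ^ p)
          * ∫⁻ ω in {ω | (1 - k) * ε < |X₁ ω|}, ENNReal.ofReal (|X₁ ω| ^ (-p)) ∂μ := by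
        refine setLIntegral_le_mul_measure_add_mul_setLIntegral
          (measurableSet_le measurable_const (hX₁.add hX₂).abs)
          (measurableSet_le measurable_const hX₂.abs) ENNReal.ofReal_ne_top
          (fun ω hω => ENNReal.ofReal_le_ofReal
            (Real.rpow_le_rpow_of_nonpos hε hω.1 (neg_nonpos.mpr hp.le))) hsdiff
          (fun ω hω => ?_)
        rw [← ENNReal.ofReal_mul (by positivity)]
        exact ENNReal.ofReal_le_ofReal <| rpow_neg_le_mul_rpow_neg
          ((mul_pos (by linarith) hε).trans (hsdiff hω)) (by linarith)
          (abs_le_one_add_mul_abs_add hk0.le hω.1 (not_le.mp hω.2)) hp.le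
    _ ≤ _ := by
        rw [mul_add]
        exact add_le_add_left (le_mul_of_one_le_left' hK) _

theorem neg_moment_sum_bound (Ω : Type*) [MeasurableSpace Ω] (μ : Measure Ω)
    [IsProbabilityMeasure μ] (p k : ℝ) (hp : 0 < p) (hk : k ∈ Set.Ioo (0 : ℝ) 1) :
    ∃ K > 0, ∀ ε : ℝ, 0 < ε → ∀ X₁ X₂ : Ω → ℝ, Measurable X₁ → Measurable X₂ →
      ∫⁻ ω in {ω | ε ≤ |X₁ ω + X₂ ω|}, ENNReal.ofReal (|X₁ ω + X₂ ω| ^ (-p)) ∂μ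
        ≤ ENNReal.ofReal K *
            (ENNReal.ofReal (ε ^ (-p)) * μ {ω | k * ε ≤ |X₂ ω|}
              + ∫⁻ ω in {ω | (1 - k) * ε < |X₁ ω|},
                  ENNReal.ofReal (|X₁ ω| ^ (-p)) ∂μ) :=
  neg_moment_sum_bound_general Ω μ p k hp hk
end

section
/- Let W be a standard Brownian motion, and define σ̄_s = σ₀ + σ̃₀ W_s for s ∈ [0, Δ], where σ₀ ≠ 0 and σ̃₀ are constants. Then for all p₀, p₁ > 0 there is a constant K (depending on σ₀, σ̃₀, p₀, p₁) such that E[ ( ∫₀^Δ |σ̄_s|^{p₀} ds )^{−p₁} ] ≤ K Δ^{−p₁} for all Δ > 0 small enough. -/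
open MeasureTheory ProbabilityTheory

/-- A standard one-dimensional Brownian motion started at 0. -/
structure IsBrownianMotion {Ω : Type*} [MeasurableSpace Ω] (μ : Measure Ω)
    (W : ℝ → Ω → ℝ) : Prop where
  meas : ∀ t, Measurable (W t)
  start : ∀ ω, W 0 ω = 0
  cont : ∀ ω, Continuous fun t => W t ω
  incr : ∀ s t : ℝ, 0 ≤ s → s ≤ t →
    Measure.map (fun ω => W t ω - W s ω) μ = gaussianReal 0 (Real.toNNReal (t - s))
  indep : ∀ (n : ℕ) (t : Fin (n + 1) → ℝ), Monotone t → (∀ i, 0 ≤ t i) →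
    iIndepFun
      (fun i : Fin n => fun ω => W (t i.succ) ω - W (t i.castSucc) ω) μ

/-!
If `|W| ≤ b` on `[0, t]`, where `|σ̃₀| b ≤ |σ₀| / 2`, the integrand is at least
`c = (|σ₀| / 2) ^ p₀` there, so the time integral over `[0, Δ]` is at least `c t`. Sorting the
paths by the first dyadic scale `t = Δ 2⁻ᵏ` at which this happens bounds the negative moment by
`(c Δ) ^ (-p₁) + ∑ₖ (c Δ 2⁻ᵏ⁻¹) ^ (-p₁) P(sup_{[0, Δ 2⁻ᵏ]} |W| > b)`. Lévy's maximal inequality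
(first passage over `b` on a dyadic grid, independence of the increment after the passage,
continuity of the paths) and Chebyshev's inequality for a `2m`-th Gaussian moment bound that
probability by `C (Δ 2⁻ᵏ) ^ m`; for `m > p₁` the series is geometric, with sum `O(Δ ^ (-p₁))`.
-/

open Set Filter Topology Function
open scoped NNReal ENNReal

lemma integral_pow_two_mul_gaussianReal (v : ℝ≥0) (m : ℕ) :
    ∫ x, x ^ (2 * m) ∂gaussianReal 0 v = v ^ m * ∫ x, x ^ (2 * m) ∂gaussianReal 0 1 := by
  have hmap : (gaussianReal 0 1).map (√v * ·) = gaussianReal 0 v := by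
    rw [gaussianReal_map_const_mul]
    congr 1
    · simp
    · ext; simp
  rw [← hmap, integral_map (by fun_prop) (by fun_prop), ← integral_const_mul]
  congr 1 with x
  rw [mul_pow, pow_mul, Real.sq_sqrt v.coe_nonneg]

lemma gaussianReal_setOf_lt_abs_le (v : ℝ≥0) (m : ℕ) {r : ℝ} (hr : 0 < r) :
    gaussianReal 0 v {x | r < |x|}
      ≤ ENNReal.ofReal (v ^ m * (∫ x, x ^ (2 * m) ∂gaussianReal 0 1) / r ^ (2 * m)) := by
  have hpow : ∀ x : ℝ, x ^ (2 * m) = |x| ^ (2 * m) := fun x => by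
    rw [pow_mul, pow_mul, sq_abs]
  have hint : Integrable (fun x : ℝ => x ^ (2 * m)) (gaussianReal 0 v) := by
    simpa [hpow] using (memLp_id_gaussianReal' (μ := 0) (v := v) (2 * m : ℕ)
      (ENNReal.natCast_ne_top _)).integrable_norm_pow'
  have hmarkov := mul_meas_ge_le_integral_of_nonneg
    (Eventually.of_forall fun x => (even_two_mul m).pow_nonneg x) hint (r ^ (2 * m))
  rw [integral_pow_two_mul_gaussianReal, ← le_div_iff₀' (by positivity)] at hmarkov
  calc gaussianReal 0 v {x | r < |x|} ≤ gaussianReal 0 v {x | r ^ (2 * m) ≤ x ^ (2 * m)} :=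
        measure_mono fun x hx => by
          rw [mem_ofPred_eq, hpow x]; exact pow_le_pow_left₀ hr.le (le_of_lt hx) _
    _ ≤ _ := by rw [← ofReal_measureReal]; exact ENNReal.ofReal_le_ofReal hmarkov

lemma measure_iUnion_le_two_mul_of_indep {ι Ω : Type*} [Countable ι] {mΩ : MeasurableSpace Ω}
    {μ : Measure Ω} {C B : ι → Set Ω} {A : Set Ω} (hdisj : Pairwise (Disjoint on C))
    (hmeas : ∀ i, MeasurableSet (C i ∩ B i)) (hindep : ∀ i, μ (C i ∩ B i) = μ (C i) * μ (B i))
    (hB : ∀ i, 2⁻¹ ≤ μ (B i)) (hA : ∀ i, C i ∩ B i ⊆ A) :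
    μ (⋃ i, C i) ≤ 2 * μ A := by
  have hCB : ∀ i, μ (C i) ≤ 2 * μ (C i ∩ B i) := fun i => calc
    μ (C i) = μ (C i) * (2 * 2⁻¹) := by
        rw [ENNReal.mul_inv_cancel two_ne_zero ENNReal.ofNat_ne_top, mul_one]
    _ ≤ μ (C i) * (2 * μ (B i)) := by gcongr; exact hB i
    _ = 2 * μ (C i ∩ B i) := by rw [hindep, mul_left_comm]
  calc μ (⋃ i, C i) ≤ ∑' i, μ (C i) := measure_iUnion_le C
    _ ≤ ∑' i, 2 * μ (C i ∩ B i) := ENNReal.tsum_le_tsum hCB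
    _ = 2 * μ (⋃ i, C i ∩ B i) := by
      rw [ENNReal.tsum_mul_left, measure_iUnion (fun i j hij =>
        (hdisj hij).mono inter_subset_left inter_subset_left) hmeas]
    _ ≤ 2 * μ A := by gcongr; exact iUnion_subset hA

namespace ProbabilityTheory.HasIndepIncrements

variable {ι Ω : Type*} [Preorder ι] {mΩ : MeasurableSpace Ω} {μ : Measure Ω} {X : ι → Ω → ℝ}

lemma indep_iSup_comap_sub (hX : HasIndepIncrements X μ)
    (hmeas : ∀ t, Measurable (X t)) {u : ℕ → ι} (hu : Monotone u) (h0 : ∀ ω, X (u 0) ω = 0)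
    {i : ℕ} {t : ι} (hit : u i ≤ t) :
    Indep (⨆ j ≤ i, MeasurableSpace.comap (X (u j)) inferInstance)
      (MeasurableSpace.comap (fun ω => X t ω - X (u i) ω) inferInstance) μ := by
  -- `τ` follows `u` up to `i`, then jumps to `t`: `X (u j)` for `j ≤ i` is a sum of the
  -- increments of `τ` before the one that ends at `t`.
  set τ : ℕ → ι := fun l => if l ≤ i then u l else t
  have hτ : Monotone τ := by
    intro l l' hll'
    simp only [τ]
    split_ifs <;> first
      | exact hu hll' | exact (hu (by omega)).trans hit | exact le_rfl | omega
  set Y : ℕ → Ω → ℝ := fun l ω => X (τ (l + 1)) ω - X (τ l) ω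
  have hY : ∀ l, Measurable (Y l) := fun l => (hmeas _).sub (hmeas _)
  have hindep := indep_iSup_of_disjoint (fun l => (hY l).comap_le)
    ((iIndepFun_iff_iIndep _ _ _).1 (hX.nat hτ)) (S := Iio i) (T := {i}) (by simp)
  have hYi : Y i = fun ω => X t ω - X (u i) ω := by simp [Y, τ]
  rw [iSup_singleton, hYi] at hindep
  refine indep_of_indep_of_le_left hindep (iSup₂_le fun j hj => Measurable.comap_le ?_)
  have htelescope : X (u j) = fun ω => ∑ l ∈ Finset.range j, Y l ω := by
    ext ω
    rw [Finset.sum_range_sub (fun l => X (τ l) ω)]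
    simp [τ, hj, h0]
  rw [htelescope]
  exact Finset.measurable_sum _ fun l hl =>
    (comap_measurable (Y l)).mono
      (le_iSup₂ (f := fun l (_ : l ∈ Iio i) => MeasurableSpace.comap (Y l) inferInstance) l
        ((Finset.mem_range.1 hl).trans_le hj)) le_rfl

lemma measure_exists_lt_abs_le [IsProbabilityMeasure μ]
    (hX : HasIndepIncrements X μ) (hmeas : ∀ t, Measurable (X t)) {u : ℕ → ι}
    (hu : Monotone u) (h0 : ∀ ω, X (u 0) ω = 0) {t : ι} (hut : ∀ j, u j ≤ t) {b : ℝ}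
    (hhalf : ∀ j, μ {ω | b / 2 < |X t ω - X (u j) ω|} ≤ 2⁻¹) :
    μ {ω | ∃ j, b < |X (u j) ω|} ≤ 2 * μ {ω | b / 2 < |X t ω|} := by
  -- `disjointed A i` is the event that `|X (u ·)|` first exceeds `b` at index `i`.
  set A : ℕ → Set Ω := fun j => {ω | b < |X (u j) ω|}
  set B : ℕ → Set Ω := fun j => {ω | |X t ω - X (u j) ω| ≤ b / 2}
  have hBmeas : ∀ i, MeasurableSet (B i) := fun i =>
    measurableSet_le ((hmeas t).sub (hmeas (u i))).abs measurable_const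
  have hset : {ω | ∃ j, b < |X (u j) ω|} = ⋃ j, disjointed A j := by
    rw [iUnion_disjointed]; ext; simp [A]
  rw [hset]
  refine measure_iUnion_le_two_mul_of_indep (disjoint_disjointed A)
    (fun i => (MeasurableSet.disjointed (fun j => measurableSet_lt measurable_const
      (hmeas (u j)).abs) i).inter (hBmeas i)) (fun i => ?_) (fun i => ?_) (fun i => ?_)
  · set M := ⨆ j ≤ i, MeasurableSpace.comap (X (u j)) inferInstance
    have hA : ∀ j ≤ i, MeasurableSet[M] (A j) := fun j hj => measurableSet_lt measurable_const
      ((comap_measurable _).mono (le_iSup₂ (f := fun j (_ : j ≤ i) =>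
        MeasurableSpace.comap (X (u j)) inferInstance) j hj) le_rfl).abs
    refine (Indep_iff _ _ μ).1 (hX.indep_iSup_comap_sub hmeas hu h0 (hut i)) _ _ ?_ ?_
    · rw [disjointed_eq_inter_compl]
      exact (hA i le_rfl).inter (.iInter fun j => .iInter fun hj => (hA j hj.le).compl)
    · exact ⟨{x | |x| ≤ b / 2}, measurableSet_le measurable_abs measurable_const, rfl⟩
  · have hcompl : (B i)ᶜ = {ω | b / 2 < |X t ω - X (u i) ω|} := by ext; simp [B]
    calc (2⁻¹ : ℝ≥0∞) = 1 - 2⁻¹ := ENNReal.one_sub_inv_two.symm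
      _ ≤ 1 - μ (B i)ᶜ := tsub_le_tsub_left (hcompl ▸ hhalf i) 1
      _ = μ (B i) := by
        rw [prob_compl_eq_one_sub (hBmeas i),
          ENNReal.sub_sub_cancel ENNReal.one_ne_top prob_le_one]
  · rintro ω ⟨hωA, hωB : |X t ω - X (u i) ω| ≤ b / 2⟩
    have hωA : b < |X (u i) ω| := disjointed_subset A i hωA
    have := abs_sub_abs_le_abs_sub (X (u i) ω) (X t ω)
    rw [abs_sub_comm] at this
    show b / 2 < |X t ω|
    linarith

end ProbabilityTheory.HasIndepIncrements

noncomputable def dyadicGrid (T : ℝ≥0) (n j : ℕ) : ℝ≥0 := T * min 1 ((j : ℝ≥0) / 2 ^ n)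

lemma monotone_dyadicGrid (T : ℝ≥0) (n : ℕ) : Monotone (dyadicGrid T n) := fun j j' h => by
  unfold dyadicGrid; gcongr

@[simp] lemma dyadicGrid_zero (T : ℝ≥0) (n : ℕ) : dyadicGrid T n 0 = 0 := by simp [dyadicGrid]

lemma dyadicGrid_le (T : ℝ≥0) (n j : ℕ) : dyadicGrid T n j ≤ T :=
  mul_le_of_le_one_right' (min_le_left _ _)

lemma dyadicGrid_succ_two_mul (T : ℝ≥0) (n j : ℕ) :
    dyadicGrid T (n + 1) (2 * j) = dyadicGrid T n j := by
  simp only [dyadicGrid, pow_succ, Nat.cast_mul, Nat.cast_ofNat]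
  rw [mul_comm (2 : ℝ≥0), mul_div_mul_right _ _ two_ne_zero]

lemma tendsto_dyadicGrid_floor {T s : ℝ≥0} (hs : s ≤ T) :
    Tendsto (fun n => dyadicGrid T n ⌊s * 2 ^ n / T⌋₊) atTop (𝓝 s) := by
  rcases eq_or_ne T 0 with rfl | hT
  · simp [nonpos_iff_eq_zero.1 hs, dyadicGrid]
  set x : ℕ → ℝ≥0 := fun n => s * 2 ^ n / T
  have hs_eq : ∀ n, (s : ℝ) = T * x n / 2 ^ n := fun n => by simp [x]; field_simp
  have hfloor : ∀ n, (⌊x n⌋₊ : ℝ≥0) ≤ x n := fun n => Nat.floor_le (by positivity)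
  have hgrid : ∀ n, (dyadicGrid T n ⌊x n⌋₊ : ℝ) = T * ⌊x n⌋₊ / 2 ^ n := fun n => by
    have : (⌊x n⌋₊ : ℝ≥0) / 2 ^ n ≤ 1 := by
      rw [div_le_one (by positivity)]
      refine (hfloor n).trans ?_
      rw [div_le_iff₀ (pos_iff_ne_zero.2 hT), mul_comm]
      gcongr
    simp [dyadicGrid, min_eq_right this, mul_div_assoc]
  rw [← NNReal.tendsto_coe]
  refine tendsto_of_tendsto_of_tendsto_of_le_of_le (g := fun n => (s : ℝ) - T / 2 ^ n) ?_
    tendsto_const_nhds (fun n => ?_) (fun n => ?_)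
  · simpa using tendsto_const_nhds.sub (tendsto_const_nhds (x := (T : ℝ)).div_atTop
      (tendsto_pow_atTop_atTop_of_one_lt one_lt_two))
  · have : (x n : ℝ) - 1 ≤ ⌊x n⌋₊ := by
      have := Nat.lt_floor_add_one (x n)
      rw [sub_le_iff_le_add]; exact_mod_cast this.le
    dsimp only
    rw [hgrid, hs_eq n, ← sub_div, ← mul_sub_one]
    gcongr
  · rw [hgrid, hs_eq n]
    gcongr
    exact_mod_cast hfloor n

lemma setOf_exists_le_lt_abs_eq_iUnion {Ω : Type*} {X : ℝ≥0 → Ω → ℝ}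
    (hcont : ∀ ω, Continuous fun t => X t ω) (t : ℝ≥0) (b : ℝ) :
    {ω | ∃ s ≤ t, b < |X s ω|} = ⋃ n, {ω | ∃ j, b < |X (dyadicGrid t n j) ω|} := by
  ext ω
  simp only [mem_ofPred_eq, mem_iUnion]
  constructor
  · rintro ⟨s, hs, hb⟩
    obtain ⟨n, hn⟩ := (((hcont ω).abs.tendsto s).comp (tendsto_dyadicGrid_floor hs)).eventually
      (lt_mem_nhds hb) |>.exists
    exact ⟨n, _, hn⟩
  · rintro ⟨n, j, hj⟩
    exact ⟨_, dyadicGrid_le t n j, hj⟩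

namespace ProbabilityTheory.HasIndepIncrements

variable {Ω : Type*} {mΩ : MeasurableSpace Ω} {μ : Measure Ω} {X : ℝ≥0 → Ω → ℝ}

lemma measure_exists_le_lt_abs_le [IsProbabilityMeasure μ] (hX : HasIndepIncrements X μ)
    (hmeas : ∀ t, Measurable (X t)) (hcont : ∀ ω, Continuous fun t => X t ω)
    (h0 : ∀ ω, X 0 ω = 0) {t : ℝ≥0} {b : ℝ}
    (hhalf : ∀ v ≤ t, μ {ω | b / 2 < |X t ω - X v ω|} ≤ 2⁻¹) :
    μ {ω | ∃ s ≤ t, b < |X s ω|} ≤ 2 * μ {ω | b / 2 < |X t ω|} := by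
  rw [setOf_exists_le_lt_abs_eq_iUnion hcont, Monotone.measure_iUnion]
  · exact iSup_le fun n => hX.measure_exists_lt_abs_le hmeas (monotone_dyadicGrid t n)
      (by simp [h0]) (dyadicGrid_le t n) fun j => hhalf _ (dyadicGrid_le t n j)
  · exact monotone_nat_of_le_succ fun n ω ⟨j, hj⟩ => ⟨2 * j, by rwa [dyadicGrid_succ_two_mul]⟩

end ProbabilityTheory.HasIndepIncrements

namespace IsBrownianMotion

variable {Ω : Type*} [MeasurableSpace Ω] {μ : Measure Ω} {W : ℝ → Ω → ℝ}

lemma hasIndepIncrements (hW : IsBrownianMotion μ W) :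
    HasIndepIncrements (fun t : ℝ≥0 => W t) μ :=
  fun n t ht => hW.indep n (fun i => t i) (NNReal.coe_mono.comp ht) fun i => (t i).2

lemma measure_lt_abs_sub_le (hW : IsBrownianMotion μ W) {s t : ℝ} (hs : 0 ≤ s) (hst : s ≤ t)
    (m : ℕ) {r : ℝ} (hr : 0 < r) :
    μ {ω | r < |W t ω - W s ω|}
      ≤ ENNReal.ofReal ((t - s) ^ m * (∫ x, x ^ (2 * m) ∂gaussianReal 0 1) / r ^ (2 * m)) := by
  have hmeas : Measurable fun ω => W t ω - W s ω := (hW.meas t).sub (hW.meas s)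
  change μ ((fun ω => W t ω - W s ω) ⁻¹' {x | r < |x|}) ≤ _
  rw [← Measure.map_apply hmeas (measurableSet_lt measurable_const measurable_abs),
    hW.incr s t hs hst]
  have := gaussianReal_setOf_lt_abs_le (t - s).toNNReal m hr
  rwa [Real.coe_toNNReal _ (sub_nonneg.2 hst)] at this

lemma measurableSet_setOf_exists_le_lt_abs (hW : IsBrownianMotion μ W) (t : ℝ≥0) (b : ℝ) :
    MeasurableSet {ω | ∃ s : ℝ≥0, s ≤ t ∧ b < |W s ω|} := by
  rw [setOf_exists_le_lt_abs_eq_iUnion (X := fun s : ℝ≥0 => W s)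
    (fun ω => (hW.cont ω).comp NNReal.continuous_coe)]
  simp only [ofPred_exists]
  exact .iUnion fun n => .iUnion fun j => measurableSet_lt measurable_const (hW.meas _).abs

lemma exists_measure_exists_le_lt_abs_le [IsProbabilityMeasure μ] (hW : IsBrownianMotion μ W)
    {b : ℝ} (hb : 0 < b) (m : ℕ) :
    ∃ C ≥ 0, ∃ t₀ > 0, ∀ t : ℝ≥0, t ≤ t₀ →
      μ {ω | ∃ s : ℝ≥0, s ≤ t ∧ b < |W s ω|} ≤ ENNReal.ofReal (C * t ^ m) := by
  set M₁ := ∫ x, x ^ (2 * 1) ∂gaussianReal 0 1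
  set Mₘ := ∫ x, x ^ (2 * m) ∂gaussianReal 0 1
  have hM₁ : 0 ≤ M₁ := integral_nonneg fun x => (even_two_mul 1).pow_nonneg x
  have hMₘ : 0 ≤ Mₘ := integral_nonneg fun x => (even_two_mul m).pow_nonneg x
  -- Up to time `t₀`, Chebyshev's inequality puts mass at most `1 / 2` on increments above `b / 2`.
  refine ⟨2 * Mₘ / (b / 2) ^ (2 * m), by positivity,
    ((b / 2) ^ 2 / (2 * (M₁ + 1))).toNNReal, by simp; positivity, fun t ht => ?_⟩
  have hhalf : ∀ v ≤ t, μ {ω | b / 2 < |W t ω - W v ω|} ≤ 2⁻¹ := fun v hv => by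
    refine (hW.measure_lt_abs_sub_le v.2 hv 1 (half_pos hb)).trans ?_
    rw [← ENNReal.ofReal_ofNat 2, ← ENNReal.ofReal_inv_of_pos two_pos]
    refine ENNReal.ofReal_le_ofReal ?_
    have ht' : (t : ℝ) ≤ (b / 2) ^ 2 / (2 * (M₁ + 1)) :=
      (Real.le_toNNReal_iff_coe_le (by positivity)).1 ht
    have hv' : (0 : ℝ) ≤ v := v.2
    rw [pow_one, div_le_iff₀ (by positivity)]
    calc ((t : ℝ) - v) * M₁ ≤ t * (M₁ + 1) := by nlinarith
      _ ≤ (b / 2) ^ 2 / (2 * (M₁ + 1)) * (M₁ + 1) := by gcongr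
      _ = 2⁻¹ * (b / 2) ^ (2 * 1) := by field_simp; ring
  calc μ {ω | ∃ s : ℝ≥0, s ≤ t ∧ b < |W s ω|}
      ≤ 2 * μ {ω | b / 2 < |W t ω|} :=
        hW.hasIndepIncrements.measure_exists_le_lt_abs_le (fun s => hW.meas s)
          (fun ω => (hW.cont ω).comp NNReal.continuous_coe) (by simp [hW.start]) hhalf
    _ ≤ 2 * ENNReal.ofReal (t ^ m * Mₘ / (b / 2) ^ (2 * m)) := by
        gcongr
        simpa [hW.start] using hW.measure_lt_abs_sub_le le_rfl t.2 m (half_pos hb)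
    _ = ENNReal.ofReal (2 * Mₘ / (b / 2) ^ (2 * m) * t ^ m) := by
        rw [← ENNReal.ofReal_ofNat 2, ← ENNReal.ofReal_mul zero_le_two]
        ring_nf

end IsBrownianMotion

lemma half_abs_rpow_mul_le_setIntegral_Ioc {w : ℝ → ℝ} (hw : Continuous w) {σ₀ σt p b τ Δ : ℝ}
    (hp : 0 ≤ p) (hb : |σt| * b ≤ |σ₀| / 2) (hτ : 0 ≤ τ) (hτΔ : τ ≤ Δ)
    (hwb : ∀ s ∈ Ioc 0 τ, |w s| ≤ b) :
    (|σ₀| / 2) ^ p * τ ≤ ∫ s in Ioc 0 Δ, |σ₀ + σt * w s| ^ p := by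
  have hf : Continuous fun s => |σ₀ + σt * w s| ^ p :=
    (continuous_const.add (continuous_const.mul hw)).abs.rpow_const fun _ => Or.inr hp
  have hlow : ∀ s ∈ Ioc 0 τ, (|σ₀| / 2) ^ p ≤ |σ₀ + σt * w s| ^ p := fun s hs => by
    have h1 : |σt * w s| ≤ |σ₀| / 2 := by
      rw [abs_mul]; exact (mul_le_mul_of_nonneg_left (hwb s hs) (abs_nonneg σt)).trans hb
    have h2 := abs_sub_abs_le_abs_sub σ₀ (-(σt * w s))
    rw [sub_neg_eq_add, abs_neg] at h2
    exact Real.rpow_le_rpow (by positivity) (by linarith) hp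
  calc (|σ₀| / 2) ^ p * τ = (|σ₀| / 2) ^ p * volume.real (Ioc 0 τ) := by simp [hτ]
    _ ≤ ∫ s in Ioc 0 τ, |σ₀ + σt * w s| ^ p :=
      setIntegral_ge_of_const_le_real measurableSet_Ioc (by simp) hlow hf.integrableOn_Ioc
    _ ≤ ∫ s in Ioc 0 Δ, |σ₀ + σt * w s| ^ p :=
      setIntegral_mono_set hf.integrableOn_Ioc (Eventually.of_forall fun s => by positivity)
        (Ioc_subset_Ioc_right hτΔ).eventuallyLE

lemma exists_forall_le_abs_le_of_tendsto_zero {w : ℝ≥0 → ℝ} (hw : Continuous w) (h0 : w 0 = 0)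
    {b : ℝ} (hb : 0 < b) {t : ℕ → ℝ≥0} (ht : Tendsto t atTop (𝓝 0)) :
    ∃ k, ∀ s ≤ t k, |w s| ≤ b := by
  have : ∀ᶠ s in 𝓝 0, |w s| < b := (hw.abs.tendsto 0).eventually (gt_mem_nhds (by simp [h0, hb]))
  obtain ⟨ε, hε, hεb⟩ := (nhds_bot_basis (α := ℝ≥0)).eventually_iff.1 this
  obtain ⟨k, hk⟩ := (ht.eventually (gt_mem_nhds hε)).exists
  exact ⟨k, fun s hs => (hεb (hs.trans_lt hk)).le⟩

lemma lintegral_le_add_tsum_mul_measure_compl {Ω : Type*} {mΩ : MeasurableSpace Ω}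
    {μ : Measure Ω} {f : Ω → ℝ≥0∞} {G : ℕ → Set Ω} {κ : ℕ → ℝ≥0∞}
    (hG : ∀ k, MeasurableSet (G k)) (hcover : ∀ ω, ∃ k, ω ∈ G k)
    (hf : ∀ k, ∀ ω ∈ G k, f ω ≤ κ k) :
    ∫⁻ ω, f ω ∂μ ≤ κ 0 * μ (G 0) + ∑' k, κ (k + 1) * μ (G k)ᶜ := by
  classical
  have hpt : ∀ ω, f ω ≤ (G 0).indicator (fun _ => κ 0) ω
      + ∑' k, (G k)ᶜ.indicator (fun _ => κ (k + 1)) ω := fun ω => by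
    rcases hk : Nat.find (hcover ω) with _ | k
    · have := hk ▸ Nat.find_spec (hcover ω)
      rw [indicator_of_mem this]
      exact le_add_right (hf 0 ω this)
    · have hmem := hk ▸ Nat.find_spec (hcover ω)
      have hnot : ω ∈ (G k)ᶜ := Nat.find_min (hcover ω) (hk ▸ k.lt_succ_self)
      calc f ω ≤ κ (k + 1) := hf _ ω hmem
        _ = (G k)ᶜ.indicator (fun _ => κ (k + 1)) ω :=
          (indicator_of_mem hnot (fun _ => κ (k + 1))).symm
        _ ≤ ∑' k, (G k)ᶜ.indicator (fun _ => κ (k + 1)) ω := ENNReal.le_tsum k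
        _ ≤ _ := le_add_self
  calc ∫⁻ ω, f ω ∂μ ≤ ∫⁻ ω, ((G 0).indicator (fun _ => κ 0) ω
        + ∑' k, (G k)ᶜ.indicator (fun _ => κ (k + 1)) ω) ∂μ := lintegral_mono hpt
    _ = κ 0 * μ (G 0) + ∑' k, κ (k + 1) * μ (G k)ᶜ := by
      rw [lintegral_add_left (measurable_const.indicator (hG 0)),
        lintegral_tsum fun k => (measurable_const.indicator (hG k).compl).aemeasurable,
        lintegral_indicator_const (hG 0)]
      simp_rw [lintegral_indicator_const (hG _).compl]

namespace IsBrownianMotion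

variable {Ω : Type*} [MeasurableSpace Ω] {μ : Measure Ω} {W : ℝ → Ω → ℝ}

lemma lintegral_ofReal_rpow_neg_le [IsProbabilityMeasure μ] (hW : IsBrownianMotion μ W)
    {σ₀ σt p₀ p₁ b Δ : ℝ} (hσ₀ : σ₀ ≠ 0) (hp₀ : 0 ≤ p₀) (hp₁ : 0 ≤ p₁) (hb : 0 < b)
    (hbσ : |σt| * b ≤ |σ₀| / 2) (hΔ : 0 < Δ) :
    ∫⁻ ω, ENNReal.ofReal ((∫ s in Ioc 0 Δ, |σ₀ + σt * W s ω| ^ p₀) ^ (-p₁)) ∂μ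
      ≤ ENNReal.ofReal (((|σ₀| / 2) ^ p₀ * Δ) ^ (-p₁))
        + ∑' k : ℕ, ENNReal.ofReal (((|σ₀| / 2) ^ p₀ * (Δ / 2 ^ (k + 1))) ^ (-p₁))
          * μ {ω | ∃ s : ℝ≥0, s ≤ Δ.toNNReal / 2 ^ k ∧ b < |W s ω|} := by
  set t : ℕ → ℝ≥0 := fun k => Δ.toNNReal / 2 ^ k
  have ht : ∀ k, (t k : ℝ) = Δ / 2 ^ k := fun k => by simp [t, hΔ.le]
  set G : ℕ → Set Ω := fun k => {ω | ∃ s : ℝ≥0, s ≤ t k ∧ b < |W s ω|}ᶜ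
  have hbound : ∀ k, ∀ ω ∈ G k,
      ENNReal.ofReal ((∫ s in Ioc 0 Δ, |σ₀ + σt * W s ω| ^ p₀) ^ (-p₁))
        ≤ ENNReal.ofReal (((|σ₀| / 2) ^ p₀ * (Δ / 2 ^ k)) ^ (-p₁)) := fun k ω hω => by
    simp only [G, mem_compl_iff, mem_ofPred_eq, not_exists, not_and, not_lt] at hω
    refine ENNReal.ofReal_le_ofReal (Real.rpow_le_rpow_of_nonpos (by positivity) ?_ (by linarith))
    rw [← ht]
    refine half_abs_rpow_mul_le_setIntegral_Ioc (hW.cont ω) hp₀ hbσ (t k).2 ?_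
      fun s hs => hω ⟨s, hs.1.le⟩ hs.2
    rw [ht]
    exact div_le_self hΔ.le (one_le_pow₀ one_le_two)
  have hcover : ∀ ω, ∃ k, ω ∈ G k := fun ω => by
    have htendsto : Tendsto t atTop (𝓝 0) := by
      simpa [t, div_eq_mul_inv, ← inv_pow] using
        (NNReal.tendsto_pow_atTop_nhds_zero_of_lt_one (r := 2⁻¹) (by norm_num)).const_mul
          Δ.toNNReal
    obtain ⟨k, hk⟩ := exists_forall_le_abs_le_of_tendsto_zero
      ((hW.cont ω).comp NNReal.continuous_coe) (by simp [hW.start]) hb htendsto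
    exact ⟨k, by simpa [G] using hk⟩
  refine (lintegral_le_add_tsum_mul_measure_compl
    (fun k => (hW.measurableSet_setOf_exists_le_lt_abs _ _).compl) hcover hbound).trans ?_
  simp_rw [compl_compl]
  gcongr
  simpa using mul_le_of_le_one_right' (prob_le_one (μ := μ) (s := G 0))

end IsBrownianMotion

lemma tsum_ofReal_rpow_neg_mul_ofReal_le {a C p Δ : ℝ} {m : ℕ} (ha : 0 < a) (hC : 0 ≤ C)
    (hpm : p < m) (hΔ : 0 < Δ) (hΔ1 : Δ ≤ 1) :
    ∑' k : ℕ, ENNReal.ofReal ((a * (Δ / 2 ^ (k + 1))) ^ (-p)) * ENNReal.ofReal (C * (Δ / 2 ^ k) ^ m)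
      ≤ ENNReal.ofReal (a ^ (-p) * 2 ^ p * C / (1 - 2 ^ (p - m)) * Δ ^ (-p)) := by
  set r : ℝ := 2 ^ (p - m)
  have hr0 : 0 ≤ r := by positivity
  have hr1 : r < 1 := Real.rpow_lt_one_of_one_lt_of_neg one_lt_two (by linarith)
  have hterm : ∀ k : ℕ, (a * (Δ / 2 ^ (k + 1))) ^ (-p) * (C * (Δ / 2 ^ k) ^ m)
      ≤ a ^ (-p) * 2 ^ p * C * Δ ^ (-p) * r ^ k := fun k => by
    have h2k : (0 : ℝ) < 2 ^ k := by positivity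
    have hsplit :
        (a * (Δ / 2 ^ (k + 1))) ^ (-p) = a ^ (-p) * Δ ^ (-p) * 2 ^ p * ((2 : ℝ) ^ p) ^ k := by
      rw [Real.mul_rpow ha.le (by positivity), Real.div_rpow hΔ.le (by positivity),
        Real.rpow_neg (by positivity : (0 : ℝ) ≤ 2 ^ (k + 1)), div_inv_eq_mul,
        ← Real.rpow_natCast_mul zero_le_two, mul_comm ((k + 1 : ℕ) : ℝ) p,
        Real.rpow_mul_natCast zero_le_two, pow_succ]
      ring
    have hr : ((2 : ℝ) ^ p) ^ k * (1 / 2 ^ k) ^ m = r ^ k := by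
      rw [show r = 2 ^ (p - m) from rfl, Real.rpow_sub two_pos, Real.rpow_natCast]
      ring
    have hΔm : (Δ / 2 ^ k) ^ m ≤ (1 / 2 ^ k) ^ m := by gcongr
    calc (a * (Δ / 2 ^ (k + 1))) ^ (-p) * (C * (Δ / 2 ^ k) ^ m)
        ≤ a ^ (-p) * Δ ^ (-p) * 2 ^ p * (2 ^ p) ^ k * (C * (1 / 2 ^ k) ^ m) := by
          rw [hsplit]; gcongr
      _ = a ^ (-p) * 2 ^ p * C * Δ ^ (-p) * r ^ k := by rw [← hr]; ring
  have hsum := (hasSum_geometric_of_lt_one hr0 hr1).mul_left (a ^ (-p) * 2 ^ p * C * Δ ^ (-p))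
  calc _ ≤ ∑' k : ℕ, ENNReal.ofReal (a ^ (-p) * 2 ^ p * C * Δ ^ (-p) * r ^ k) :=
        ENNReal.tsum_le_tsum fun k => by
          rw [← ENNReal.ofReal_mul (by positivity)]; exact ENNReal.ofReal_le_ofReal (hterm k)
    _ = _ := by
        rw [← ENNReal.ofReal_tsum_of_nonneg (fun k => by positivity) hsum.summable, hsum.tsum_eq]
        ring_nf

/-- Negative moments of the time-integral of `|σ₀ + σ̃₀ W_s|^{p₀}` over `[0, Δ]` are of
order `Δ^{-p₁}` for small `Δ`. -/
theorem negative_moment_integrated_vol (Ω : Type*) [MeasurableSpace Ω] (μ : Measure Ω)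
    [IsProbabilityMeasure μ] (W : ℝ → Ω → ℝ) (hW : IsBrownianMotion μ W)
    (σ₀ σt p₀ p₁ : ℝ) (hσ₀ : σ₀ ≠ 0) (hp₀ : 0 < p₀) (hp₁ : 0 < p₁) :
    ∃ K > 0, ∃ Δ₀ > 0, ∀ Δ : ℝ, 0 < Δ → Δ ≤ Δ₀ →
      ∫⁻ ω, ENNReal.ofReal
          ((∫ s in Set.Ioc (0 : ℝ) Δ, |σ₀ + σt * W s ω| ^ p₀) ^ (-p₁)) ∂μ
        ≤ ENNReal.ofReal (K * Δ ^ (-p₁)) := by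
  obtain ⟨b, hb, hbσ⟩ : ∃ b > 0, |σt| * b ≤ |σ₀| / 2 :=
    ⟨|σ₀| / (2 * (|σt| + 1)), by positivity, by
      rw [mul_div_assoc', div_le_div_iff₀ (by positivity) two_pos]
      nlinarith [abs_nonneg σt, abs_pos.2 hσ₀]⟩
  obtain ⟨m, hm⟩ := exists_nat_gt p₁
  obtain ⟨C, hC, t₀, ht₀, hexit⟩ := hW.exists_measure_exists_le_lt_abs_le hb m
  set c := (|σ₀| / 2) ^ p₀
  have hc : 0 < c := by positivity
  have hr : 0 < 1 - (2 : ℝ) ^ (p₁ - m) :=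
    sub_pos.2 (Real.rpow_lt_one_of_one_lt_of_neg one_lt_two (by linarith))
  refine ⟨c ^ (-p₁) + c ^ (-p₁) * 2 ^ p₁ * C / (1 - 2 ^ (p₁ - m)), by positivity, min 1 t₀,
    by positivity, fun Δ hΔ hΔ₀ => ?_⟩
  have hexit' : ∀ k : ℕ, μ {ω | ∃ s : ℝ≥0, s ≤ Δ.toNNReal / 2 ^ k ∧ b < |W s ω|}
      ≤ ENNReal.ofReal (C * (Δ / 2 ^ k) ^ m) := fun k => by
    simpa [hΔ.le] using hexit _ ((div_le_self zero_le (one_le_pow₀ one_le_two)).trans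
      (Real.toNNReal_le_iff_le_coe.2 (hΔ₀.trans (min_le_right _ _))))
  calc _ ≤ _ := hW.lintegral_ofReal_rpow_neg_le hσ₀ hp₀.le hp₁.le hb hbσ hΔ
    _ ≤ ENNReal.ofReal ((c * Δ) ^ (-p₁))
          + ENNReal.ofReal (c ^ (-p₁) * 2 ^ p₁ * C / (1 - 2 ^ (p₁ - m)) * Δ ^ (-p₁)) := by
        gcongr
        exact (ENNReal.tsum_le_tsum fun k => by gcongr; exact hexit' k).trans
          (tsum_ofReal_rpow_neg_mul_ofReal_le hc hC hm hΔ (hΔ₀.trans (min_le_left _ _)))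
    _ = _ := by
        rw [← ENNReal.ofReal_add (by positivity) (by positivity), Real.mul_rpow hc.le hΔ.le]
        ring_nf
end
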